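/- Let S ⊆ M_d(ℂ) be a set of d×d matrices whose generated unital subalgebra is all of M_d(ℂ). Then on (ℂ^d)^{⊗n}, the unital subalgebra generated by the embeddings of the elements of S at the edge site 1, together with the chain permutation Hamiltonian H_P = Σ_{s=1}^{n−1} P_{s,s+1}, equals the full matrix algebra M_{d^n}(ℂ) of operators on (ℂ^d)^{⊗n}. -/

import Mathlib

/-!
Write `A_m` for the operator `A` at site `m`. Induct along the chain: suppose that all `A_s`
and the tail `T_s = Σ_{t ≥ s} P_{t,t+1}` of `H_P` lie in the algebra. Every term of `T_s`
except `P_{s,s+1}` commutes with the `A_s`, so the algebra contains the commutators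
`[P_{s,s+1}, A_s] = (A_{s+1} - A_s) P_{s,s+1}`. For an off-diagonal matrix unit `A = e_ab` the
square of this commutator is `2 A_s A_{s+1}`, and `Σ_i (e_ia)_s A_s A_{s+1} (e_bi)_s = A_{s+1}`.
Off-diagonal matrix units generate `M_d`, so all operators at site `s+1` are reached; then so
are `P_{s,s+1} = Σ_{a,b} (e_ab)_s (e_ba)_{s+1}` and `T_{s+1} = T_s - P_{s,s+1}`. Finally,
products of single-site operators give all matrix units of `(ℂ^d)^{⊗n}`.
-/

open Matrix Finset ComplexOrder

noncomputable section

/-- The Lindblad generator associated to a Hamiltonian `H` and Lindblad operators `L k`: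
`𝓛(ρ) = i(ρH − Hρ) + Σ_k (2 L_k ρ L_k† − ρ L_k† L_k − L_k† L_k ρ)`. -/
def lindblad {ι : Type*} [Fintype ι] [DecidableEq ι] {K : ℕ}
    (H : Matrix ι ι ℂ) (L : Fin K → Matrix ι ι ℂ) (ρ : Matrix ι ι ℂ) : Matrix ι ι ℂ :=
  Complex.I • (ρ * H - H * ρ) +
    ∑ k : Fin K, ((2 : ℂ) • (L k * ρ * (L k)ᴴ) - ρ * ((L k)ᴴ * L k) - ((L k)ᴴ * L k) * ρ)

/-- A density matrix: positive semidefinite with trace 1. -/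
def IsDensityMatrix {ι : Type*} [Fintype ι] [DecidableEq ι] (ρ : Matrix ι ι ℂ) : Prop :=
  ρ.PosSemidef ∧ ρ.trace = 1

/-- Embedding of a single-site operator `A` at site `m` of an `n`-site lattice
(each site of dimension `d`): it acts as `A` on factor `m` and as identity elsewhere. -/
def embed {n d : ℕ} (m : Fin n) (A : Matrix (Fin d) (Fin d) ℂ) :
    Matrix (Fin n → Fin d) (Fin n → Fin d) ℂ :=
  fun x y => A (x m) (y m) * ∏ i ∈ Finset.univ.erase m, (if x i = y i then (1 : ℂ) else 0)

/-- The permutation (swap) operator `P_{j,k}` exchanging tensor factors `j` and `k`. -/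
def swapOp {n d : ℕ} (j k : Fin n) : Matrix (Fin n → Fin d) (Fin n → Fin d) ℂ :=
  fun x y => if x = y ∘ (Equiv.swap j k) then 1 else 0

/-- The `n`-fold tensor power `ρ^{⊗n}` of a one-site matrix `ρ`. -/
def prodState (n : ℕ) {d : ℕ} (ρ : Matrix (Fin d) (Fin d) ℂ) :
    Matrix (Fin n → Fin d) (Fin n → Fin d) ℂ :=
  fun x y => ∏ i, ρ (x i) (y i)

/-- The tensor product `A 0 ⊗ A 1 ⊗ ⋯ ⊗ A (n-1)` of a family of one-site matrices. -/
def tensorFam {n d : ℕ} (A : Fin n → Matrix (Fin d) (Fin d) ℂ) :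
    Matrix (Fin n → Fin d) (Fin n → Fin d) ℂ :=
  fun x y => ∏ i, A i (x i) (y i)

/-- Partial trace over all sites except site `m`: the reduced state at site `m`. -/
def ptraceAt {n d : ℕ} (m : Fin n) (ρ : Matrix (Fin n → Fin d) (Fin n → Fin d) ℂ) :
    Matrix (Fin d) (Fin d) ℂ :=
  fun a b => ∑ g : Fin n → Fin d, if g m = a then ρ g (Function.update g m b) else 0

def σx : Matrix (Fin 2) (Fin 2) ℂ := !![0, 1; 1, 0]
def σy : Matrix (Fin 2) (Fin 2) ℂ := !![0, -Complex.I; Complex.I, 0]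
def σz : Matrix (Fin 2) (Fin 2) ℂ := !![1, 0; 0, -1]

/-- Embedding of an operator on the subsystem `A` of the first `n` sites into `n+1` sites. -/
def embedA {n d : ℕ} (B : Matrix (Fin n → Fin d) (Fin n → Fin d) ℂ) :
    Matrix (Fin (n+1) → Fin d) (Fin (n+1) → Fin d) ℂ :=
  fun x y => B (x ∘ Fin.castSucc) (y ∘ Fin.castSucc) *
    (if x (Fin.last n) = y (Fin.last n) then (1 : ℂ) else 0)

theorem AlgHom.apply_mem_of_adjoin_eq_top {R A B : Type*} [CommSemiring R] [Semiring A]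
    [Semiring B] [Algebra R A] [Algebra R B] (f : A →ₐ[R] B) {s : Set A}
    (hs : Algebra.adjoin R s = ⊤) {𝒜 : Subalgebra R B} (h : f '' s ⊆ 𝒜) (x : A) : f x ∈ 𝒜 := by
  refine Algebra.adjoin_le h ?_
  rw [← AlgHom.map_adjoin, hs]
  exact Subalgebra.mem_map.2 ⟨x, Algebra.mem_top, rfl⟩

theorem Matrix.adjoin_single_one_of_ne_eq_top {ι R : Type*} [Fintype ι] [DecidableEq ι]
    [CommRing R] :
    Algebra.adjoin R {M : Matrix ι ι R | ∃ a b, a ≠ b ∧ Matrix.single a b 1 = M} = ⊤ := by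
  set 𝒜 := Algebra.adjoin R {M : Matrix ι ι R | ∃ a b, a ≠ b ∧ Matrix.single a b 1 = M}
  have hoff {a b : ι} (hab : a ≠ b) : Matrix.single a b (1 : R) ∈ 𝒜 :=
    Algebra.subset_adjoin ⟨a, b, hab, rfl⟩
  have hdiag (a : ι) : Matrix.single a a (1 : R) ∈ 𝒜 := by
    have h : Matrix.single a a (1 : R) =
        1 - ∑ b ∈ Finset.univ.erase a, Matrix.single b a 1 * Matrix.single a b 1 := by
      simp only [Matrix.single_mul_single_same, mul_one]
      rw [← Matrix.sum_single_one, ← Finset.add_sum_erase _ _ (Finset.mem_univ a),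
        add_sub_cancel_right]
    rw [h]
    exact 𝒜.sub_mem 𝒜.one_mem (𝒜.sum_mem fun b hb =>
      𝒜.mul_mem (hoff (Finset.ne_of_mem_erase hb)) (hoff (Finset.ne_of_mem_erase hb).symm))
  refine eq_top_iff.2 fun M _ => ?_
  rw [Matrix.matrix_eq_sum_single M]
  refine 𝒜.sum_mem fun a _ => 𝒜.sum_mem fun b _ => ?_
  rw [← mul_one (M a b), ← smul_eq_mul, ← Matrix.smul_single]
  obtain rfl | hab := eq_or_ne a b
  exacts [𝒜.smul_mem (hdiag a) _, 𝒜.smul_mem (hoff hab) _]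

variable {n d : ℕ}

theorem tensorFam_mul (A B : Fin n → Matrix (Fin d) (Fin d) ℂ) :
    tensorFam (A * B) = tensorFam A * tensorFam B := by
  ext x y
  simp only [tensorFam, Pi.mul_apply, Matrix.mul_apply, Finset.prod_univ_sum,
    Fintype.piFinset_univ, Finset.prod_mul_distrib]

theorem tensorFam_one : tensorFam (1 : Fin n → Matrix (Fin d) (Fin d) ℂ) = 1 := by
  ext x y
  simp only [tensorFam, Pi.one_apply, Matrix.one_apply, Finset.prod_boole, funext_iff,
    Finset.mem_univ, true_implies]

def tensorFamMonoidHom :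
    (Fin n → Matrix (Fin d) (Fin d) ℂ) →* Matrix (Fin n → Fin d) (Fin n → Fin d) ℂ where
  toFun := tensorFam
  map_one' := tensorFam_one
  map_mul' := tensorFam_mul

theorem embed_eq_tensorFam (m : Fin n) (A : Matrix (Fin d) (Fin d) ℂ) :
    embed m A = tensorFam (Pi.mulSingle m A) := by
  ext x y
  rw [embed, tensorFam, ← Finset.mul_prod_erase _ _ (Finset.mem_univ m), Pi.mulSingle_eq_same]
  congr 1
  refine Finset.prod_congr rfl fun i hi => ?_
  rw [Pi.mulSingle_eq_of_ne (Finset.ne_of_mem_erase hi), Matrix.one_apply]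

theorem embed_apply (m : Fin n) (A : Matrix (Fin d) (Fin d) ℂ) (x y : Fin n → Fin d) :
    embed m A x y = if ∀ i ≠ m, x i = y i then A (x m) (y m) else 0 := by
  rw [embed, Finset.prod_boole]
  simp

theorem embed_single_one_apply (m : Fin n) (a b : Fin d) (x y : Fin n → Fin d) :
    embed m (Matrix.single a b (1 : ℂ)) x y =
      if y m = b ∧ x = Function.update y m a then 1 else 0 := by
  rw [embed_apply, Matrix.single_apply, ← ite_and]
  refine if_congr ?_ rfl rfl
  rw [Function.eq_update_iff]
  grind

def embedAlgHom (m : Fin n) :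
    Matrix (Fin d) (Fin d) ℂ →ₐ[ℂ] Matrix (Fin n → Fin d) (Fin n → Fin d) ℂ :=
  AlgHom.ofLinearMap
    { toFun := embed m
      map_add' := fun A B => by ext x y; simp [embed, add_mul]
      map_smul' := fun c A => by ext x y; simp [embed, mul_assoc] }
    (by simp [embed_eq_tensorFam, tensorFam_one])
    (fun A B => by simp [embed_eq_tensorFam, Pi.mulSingle_mul, tensorFam_mul])

theorem embed_zero (m : Fin n) : embed m (0 : Matrix (Fin d) (Fin d) ℂ) = 0 :=
  map_zero (embedAlgHom m)

theorem embed_one (m : Fin n) : embed m (1 : Matrix (Fin d) (Fin d) ℂ) = 1 :=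
  map_one (embedAlgHom m)

theorem embed_mul (m : Fin n) (A B : Matrix (Fin d) (Fin d) ℂ) :
    embed m (A * B) = embed m A * embed m B :=
  map_mul (embedAlgHom m) A B

theorem embed_sum {ι : Type*} (m : Fin n) (s : Finset ι) (A : ι → Matrix (Fin d) (Fin d) ℂ) :
    embed m (∑ i ∈ s, A i) = ∑ i ∈ s, embed m (A i) :=
  map_sum (embedAlgHom m) A s

theorem commute_embed {m m' : Fin n} (h : m ≠ m') (A B : Matrix (Fin d) (Fin d) ℂ) :
    Commute (embed m A) (embed m' B) := by
  rw [embed_eq_tensorFam, embed_eq_tensorFam]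
  exact (Pi.mulSingle_commute (f := fun _ => Matrix (Fin d) (Fin d) ℂ) h A B).map tensorFamMonoidHom

theorem single_eq_smul_tensorFam (x y : Fin n → Fin d) (c : ℂ) :
    Matrix.single x y c = c • tensorFam fun m => Matrix.single (x m) (y m) 1 := by
  ext u v
  simp [tensorFam, Matrix.single_apply, Finset.prod_boole, funext_iff, forall_and]

theorem eq_comp_swap_iff {α β : Type*} [DecidableEq α] (j k : α) (x y : α → β) :
    x = y ∘ Equiv.swap j k ↔ y = x ∘ Equiv.swap j k := by
  constructor <;> rintro rfl <;> ext <;> simp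

theorem swapOp_mul (j k : Fin n) (M : Matrix (Fin n → Fin d) (Fin n → Fin d) ℂ) :
    swapOp j k * M = M.submatrix (· ∘ Equiv.swap j k) id := by
  ext x y
  simp [Matrix.mul_apply, swapOp, eq_comp_swap_iff j k x]

theorem mul_swapOp (j k : Fin n) (M : Matrix (Fin n → Fin d) (Fin n → Fin d) ℂ) :
    M * swapOp j k = M.submatrix id (· ∘ Equiv.swap j k) := by
  ext x y
  simp [Matrix.mul_apply, swapOp]

theorem swapOp_comm (j k : Fin n) : swapOp (d := d) j k = swapOp k j := by
  unfold swapOp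
  rw [Equiv.swap_comm]

theorem swapOp_mul_self (j k : Fin n) : swapOp (d := d) j k * swapOp j k = 1 := by
  have hinv (x : Fin n → Fin d) : (x ∘ Equiv.swap j k) ∘ Equiv.swap j k = x := by ext; simp
  ext x y
  simp [swapOp_mul, swapOp, Matrix.one_apply, eq_comp_swap_iff, hinv, eq_comm]

theorem swapOp_mul_tensorFam (j k : Fin n) (F : Fin n → Matrix (Fin d) (Fin d) ℂ) :
    swapOp j k * tensorFam F = tensorFam (F ∘ Equiv.swap j k) * swapOp j k := by
  ext x y
  simp only [swapOp_mul, mul_swapOp, Matrix.submatrix_apply, tensorFam, Function.comp_apply, id]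
  rw [← Equiv.prod_comp (Equiv.swap j k)]
  simp

theorem swapOp_mul_embed (j k : Fin n) (A : Matrix (Fin d) (Fin d) ℂ) :
    swapOp j k * embed j A = embed k A * swapOp j k := by
  rw [embed_eq_tensorFam, embed_eq_tensorFam, swapOp_mul_tensorFam, Pi.mulSingle_comp_equiv,
    Equiv.symm_swap, Equiv.swap_apply_left]

theorem commute_swapOp_embed {j k m : Fin n} (hj : m ≠ j) (hk : m ≠ k)
    (A : Matrix (Fin d) (Fin d) ℂ) : Commute (swapOp j k) (embed m A) := by
  rw [Commute, SemiconjBy, embed_eq_tensorFam, swapOp_mul_tensorFam, Pi.mulSingle_comp_equiv,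
    Equiv.symm_swap, Equiv.swap_apply_of_ne_of_ne hj hk]

theorem swapOp_eq_sum (j k : Fin n) (hjk : j ≠ k) :
    swapOp (d := d) j k =
      ∑ a, ∑ b, embed j (Matrix.single a b 1) * embed k (Matrix.single b a 1) := by
  ext x y
  simp only [Matrix.sum_apply, Matrix.mul_apply, embed_single_one_apply, swapOp,
    Equiv.comp_swap_eq_update]
  simp [ite_and, Function.update_of_ne hjk]

theorem swapOp_commutator_embed (j k : Fin n) (A : Matrix (Fin d) (Fin d) ℂ) :
    swapOp j k * embed j A - embed j A * swapOp j k = (embed k A - embed j A) * swapOp j k := by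
  rw [swapOp_mul_embed, sub_mul]

theorem swapOp_commutator_embed_mul_self {j k : Fin n} (hjk : j ≠ k)
    {A : Matrix (Fin d) (Fin d) ℂ} (hA : A * A = 0) :
    (swapOp j k * embed j A - embed j A * swapOp j k) *
        (swapOp j k * embed j A - embed j A * swapOp j k) =
      (2 : ℂ) • (embed j A * embed k A) := by
  have hPD : swapOp j k * (embed k A - embed j A) = (embed j A - embed k A) * swapOp j k := by
    rw [mul_sub, sub_mul, swapOp_mul_embed, swapOp_comm j k, swapOp_mul_embed]
  have hsq (m : Fin n) : embed m A * embed m A = 0 := by rw [← embed_mul, hA, embed_zero]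
  calc _ = (embed k A - embed j A) * (swapOp j k * (embed k A - embed j A)) * swapOp j k := by
        rw [swapOp_commutator_embed]; noncomm_ring
    _ = (embed k A - embed j A) * (embed j A - embed k A) := by
        rw [hPD, mul_assoc, mul_assoc, swapOp_mul_self, mul_one]
    _ = (2 : ℂ) • (embed j A * embed k A) := by
        rw [sub_mul, mul_sub, mul_sub, hsq, hsq, (commute_embed hjk.symm A A).eq, two_smul]
        abel

theorem sum_embed_single_mul_mul_embed_single {j k : Fin n} (hjk : j ≠ k) (a b : Fin d)
    (B : Matrix (Fin d) (Fin d) ℂ) :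
    ∑ i, embed j (Matrix.single i a 1) * (embed j (Matrix.single a b 1) * embed k B) *
      embed j (Matrix.single b i 1) = embed k B := by
  have hterm (i : Fin d) :
      embed j (Matrix.single i a 1) * (embed j (Matrix.single a b 1) * embed k B) *
        embed j (Matrix.single b i 1) = embed j (Matrix.single i i 1) * embed k B := by
    rw [← mul_assoc, ← embed_mul, mul_assoc, (commute_embed hjk.symm B _).eq, ← mul_assoc,
      ← embed_mul]
    simp [Matrix.single_mul_single_same]
  rw [Finset.sum_congr rfl fun i _ => hterm i, ← Finset.sum_mul, ← embed_sum, Matrix.sum_single_one,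
    embed_one, one_mul]

section Subalgebra

variable {𝒜 : Subalgebra ℂ (Matrix (Fin n → Fin d) (Fin n → Fin d) ℂ)}

theorem tensorFam_mem (h𝒜 : ∀ m A, embed m A ∈ 𝒜) (F : Fin n → Matrix (Fin d) (Fin d) ℂ) :
    tensorFam F ∈ 𝒜 := by
  have hle : ⨆ m, (⊤ : Submonoid (Matrix (Fin d) (Fin d) ℂ)).map
      (MonoidHom.mulSingle (fun _ => _) m) ≤ 𝒜.toSubmonoid.comap tensorFamMonoidHom :=
    iSup_le fun m => Submonoid.map_le_iff_le_comap.2 fun A _ => by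
      simpa [tensorFamMonoidHom, ← embed_eq_tensorFam] using h𝒜 m A
  rw [Submonoid.iSup_map_mulSingle, Submonoid.pi_top] at hle
  exact hle (Submonoid.mem_top F)

theorem eq_top_of_forall_embed_mem (h𝒜 : ∀ m A, embed m A ∈ 𝒜) : 𝒜 = ⊤ := by
  refine eq_top_iff.2 fun M _ => ?_
  rw [Matrix.matrix_eq_sum_single M]
  refine 𝒜.sum_mem fun x _ => 𝒜.sum_mem fun y _ => ?_
  rw [single_eq_smul_tensorFam]
  exact 𝒜.smul_mem (tensorFam_mem h𝒜 _) _

theorem embed_mem_of_swapOp_commutator_mem {j k : Fin n} (hjk : j ≠ k)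
    (hj : ∀ A, embed j A ∈ 𝒜)
    (hC : ∀ A, swapOp j k * embed j A - embed j A * swapOp j k ∈ 𝒜) (A : Matrix (Fin d) (Fin d) ℂ) :
    embed k A ∈ 𝒜 := by
  have hoff {a b : Fin d} (hab : a ≠ b) : embed k (Matrix.single a b 1) ∈ 𝒜 := by
    have hsq : embed j (Matrix.single a b 1) * embed k (Matrix.single a b 1) ∈ 𝒜 := by
      have h := 𝒜.smul_mem (𝒜.mul_mem (hC (Matrix.single a b 1)) (hC (Matrix.single a b 1)))
        (2 : ℂ)⁻¹
      rwa [swapOp_commutator_embed_mul_self hjk (by simp [hab.symm]),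
        smul_smul, inv_mul_cancel₀ two_ne_zero, one_smul] at h
    rw [← sum_embed_single_mul_mul_embed_single hjk a b]
    exact 𝒜.sum_mem fun i _ => 𝒜.mul_mem (𝒜.mul_mem (hj _) hsq) (hj _)
  refine (embedAlgHom k).apply_mem_of_adjoin_eq_top Matrix.adjoin_single_one_of_ne_eq_top ?_ A
  rintro _ ⟨_, ⟨a, b, hab, rfl⟩, rfl⟩
  exact hoff hab

end Subalgebra

def chainSwapSumFrom (n d m : ℕ) : Matrix (Fin (n + 1) → Fin d) (Fin (n + 1) → Fin d) ℂ :=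
  ∑ s : Fin n with m ≤ s.val, swapOp s.castSucc s.succ

theorem chainSwapSumFrom_zero :
    chainSwapSumFrom n d 0 = ∑ s : Fin n, swapOp s.castSucc s.succ := by
  simp [chainSwapSumFrom]

theorem chainSwapSumFrom_eq_add (s : Fin n) :
    chainSwapSumFrom n d s = swapOp s.castSucc s.succ + chainSwapSumFrom n d (s + 1) := by
  rw [chainSwapSumFrom, chainSwapSumFrom, ← Finset.sum_insert (f := fun t : Fin n =>
    swapOp (d := d) t.castSucc t.succ) (by simp)]
  congr 1
  ext t
  simp only [Finset.mem_filter, Finset.mem_insert, Finset.mem_univ, true_and, Fin.ext_iff]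
  omega

theorem commute_chainSwapSumFrom_embed (s : Fin n) (A : Matrix (Fin d) (Fin d) ℂ) :
    Commute (chainSwapSumFrom n d (s + 1)) (embed s.castSucc A) := by
  refine Commute.sum_left _ _ _ fun t ht => commute_swapOp_embed ?_ ?_ A <;>
    simp only [Finset.mem_filter, Finset.mem_univ, true_and, ne_eq, Fin.ext_iff, Fin.val_castSucc,
      Fin.val_succ] at ht ⊢ <;> omega

theorem embed_mem_of_chainSwapSum_mem
    {𝒜 : Subalgebra ℂ (Matrix (Fin (n + 1) → Fin d) (Fin (n + 1) → Fin d) ℂ)}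
    (h0 : ∀ A, embed 0 A ∈ 𝒜) (hH : ∑ s : Fin n, swapOp s.castSucc s.succ ∈ 𝒜)
    (m : Fin (n + 1)) (A : Matrix (Fin d) (Fin d) ℂ) : embed m A ∈ 𝒜 := by
  suffices h : ∀ m : Fin (n + 1), (∀ A, embed m A ∈ 𝒜) ∧ chainSwapSumFrom n d m ∈ 𝒜 from
    (h m).1 A
  intro m
  induction m using Fin.induction with
  | zero => exact ⟨h0, chainSwapSumFrom_zero ▸ hH⟩
  | succ s ih =>
    obtain ⟨hE, hT⟩ := ih
    rw [Fin.val_castSucc, chainSwapSumFrom_eq_add] at hT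
    have hC (A : Matrix (Fin d) (Fin d) ℂ) :
        swapOp s.castSucc s.succ * embed s.castSucc A -
          embed s.castSucc A * swapOp s.castSucc s.succ ∈ 𝒜 := by
      have h := 𝒜.sub_mem (𝒜.mul_mem hT (hE A)) (𝒜.mul_mem (hE A) hT)
      rwa [add_mul, mul_add, (commute_chainSwapSumFrom_embed s A).eq, add_sub_add_right_eq_sub] at h
    have hE' := embed_mem_of_swapOp_commutator_mem (Fin.castSucc_lt_succ (i := s)).ne hE hC
    have hP : swapOp s.castSucc s.succ ∈ 𝒜 := by
      rw [swapOp_eq_sum _ _ (Fin.castSucc_lt_succ (i := s)).ne]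
      exact 𝒜.sum_mem fun a _ => 𝒜.sum_mem fun b _ => 𝒜.mul_mem (hE _) (hE' _)
    refine ⟨hE', ?_⟩
    simpa using 𝒜.sub_mem hT hP

/-- If a set `S ⊆ M_d(ℂ)` generates the full matrix algebra `M_d(ℂ)` as a
unital subalgebra, then the embeddings of the elements of `S` at the edge site `1` of a chain
of `n+1` sites, together with the chain permutation Hamiltonian `H_P = Σ_s P_{s,s+1}`,
generate the full matrix algebra of operators on `(ℂ^d)^{⊗(n+1)}`. -/
theorem edge_site_generates_full_algebra (n d : ℕ) (S : Set (Matrix (Fin d) (Fin d) ℂ))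
    (hS : Algebra.adjoin ℂ S = ⊤) :
    Algebra.adjoin ℂ
        ((embed (0 : Fin (n+1)) '' S) ∪ {∑ s : Fin n, swapOp s.castSucc s.succ}) = ⊤ := by
  refine eq_top_of_forall_embed_mem (embed_mem_of_chainSwapSum_mem (fun A => ?_) ?_)
  · exact (embedAlgHom 0).apply_mem_of_adjoin_eq_top hS
      (Set.subset_union_left.trans Algebra.subset_adjoin) A
  · exact Algebra.subset_adjoin (Set.mem_union_right _ rfl)

end
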